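/- Let k, d, n be natural numbers with k ≥ 1, d ≥ 0 and n ≥ 2. If n is even, then δ(k,d,n) > 0 if and only if either k ≠ d + 1, or k = d + 1 with d ≠ 0. -/
import Mathlib

open Finset

def delta (k d n : ℕ) : ℤ :=
  ∑ i ∈ Finset.range (n + 1), ∑ j ∈ Finset.range (n - i + 1),
    (Nat.choose (n + 1) (n - i - j) : ℤ) * (-(k : ℤ)) ^ j * ((d : ℤ) - 1) ^ i

lemma delta_eq (k d n : ℕ) :
    delta k d n = ∑ m ∈ range (n + 1), (Nat.choose (n + 1) (n - m) : ℤ) *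
      ∑ i ∈ range (m + 1), ((d : ℤ) - 1) ^ i * (-(k : ℤ)) ^ (m - i) := by
  unfold delta
  have h1 : (∑ i ∈ range (n + 1), ∑ j ∈ range (n - i + 1),
      (Nat.choose (n + 1) (n - i - j) : ℤ) * (-(k : ℤ)) ^ j * ((d : ℤ) - 1) ^ i)
      = ∑ i ∈ range (n + 1), ∑ j ∈ range (n + 1 - i),
      (Nat.choose (n + 1) (n - i - j) : ℤ) * (-(k : ℤ)) ^ j * ((d : ℤ) - 1) ^ i := by
    refine Finset.sum_congr rfl fun i hi => ?_
    have : n - i + 1 = n + 1 - i := by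
      have := Finset.mem_range.mp hi; omega
    rw [this]
  rw [h1, ← Finset.sum_range_diag_flip (n + 1)
    (fun i j => (Nat.choose (n + 1) (n - i - j) : ℤ) * (-(k : ℤ)) ^ j * ((d : ℤ) - 1) ^ i)]
  refine Finset.sum_congr rfl fun m hm => ?_
  rw [Finset.mul_sum]
  refine Finset.sum_congr rfl fun t ht => ?_
  have htm : t ≤ m := Nat.lt_succ_iff.mp (Finset.mem_range.mp ht)
  have : n - t - (m - t) = n - m := by omega
  rw [this]; ring

lemma binom_aux (n : ℕ) (x : ℤ) :
    ∑ m ∈ range (n + 1), (Nat.choose (n + 1) (n - m) : ℤ) * x ^ (m + 1)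
      = (x + 1) ^ (n + 1) - 1 := by
  have h := add_pow x 1 (n + 1)
  simp only [one_pow, mul_one] at h
  calc ∑ m ∈ range (n + 1), (Nat.choose (n + 1) (n - m) : ℤ) * x ^ (m + 1)
      = ∑ m ∈ range (n + 1), x ^ (m + 1) * (Nat.choose (n + 1) (m + 1) : ℤ) := by
        refine Finset.sum_congr rfl fun m hm => ?_
        have hm' : m + 1 ≤ n + 1 := by have := Finset.mem_range.mp hm; omega
        have h2 : n - m = (n + 1) - (m + 1) := by omega
        rw [mul_comm, h2, Nat.choose_symm hm']
    _ = (∑ m ∈ range (n + 2), x ^ m * (Nat.choose (n + 1) m : ℤ)) - 1 := by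
        rw [Finset.sum_range_succ' (fun m => x ^ m * (Nat.choose (n + 1) m : ℤ)) (n + 1)]
        norm_num
    _ = (x + 1) ^ (n + 1) - 1 := by rw [← h]

lemma delta_mul (k d n : ℕ) :
    delta k d n * ((d : ℤ) + (k : ℤ) - 1)
      = (d : ℤ) ^ (n + 1) - (1 - (k : ℤ)) ^ (n + 1) := by
  have hxy : (d : ℤ) + k - 1 = ((d : ℤ) - 1) - (-(k : ℤ)) := by ring
  rw [delta_eq, hxy, Finset.sum_mul]
  have hterm : ∀ m ∈ range (n + 1),
      ((Nat.choose (n + 1) (n - m) : ℤ) *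
        ∑ i ∈ range (m + 1), ((d : ℤ) - 1) ^ i * (-(k : ℤ)) ^ (m - i)) *
        (((d : ℤ) - 1) - (-(k : ℤ)))
      = (Nat.choose (n + 1) (n - m) : ℤ) * (((d : ℤ) - 1) ^ (m + 1))
        - (Nat.choose (n + 1) (n - m) : ℤ) * ((-(k : ℤ)) ^ (m + 1)) := by
    intro m hm
    have hg := geom_sum₂_mul ((d : ℤ) - 1) (-(k : ℤ)) (m + 1)
    simp only [Nat.add_sub_cancel] at hg
    rw [mul_assoc, hg, mul_sub]
  rw [Finset.sum_congr rfl hterm, Finset.sum_sub_distrib, binom_aux, binom_aux]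
  ring_nf

lemma delta_one_zero (n : ℕ) (hn : 1 ≤ n) : delta 1 0 n = 0 := by
  rw [delta_eq]
  have hinner : ∀ m ∈ range (n + 1),
      (Nat.choose (n + 1) (n - m) : ℤ) *
        ∑ i ∈ range (m + 1), ((0 : ℕ) - 1 : ℤ) ^ i * (-((1 : ℕ) : ℤ)) ^ (m - i)
      = ((n : ℤ) + 1) * ((-1) ^ m * (Nat.choose n m : ℤ)) := by
    intro m hm
    have hm' : m ≤ n := Nat.lt_succ_iff.mp (Finset.mem_range.mp hm)
    have h1 : ∀ i ∈ range (m + 1),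
        ((0 : ℕ) - 1 : ℤ) ^ i * (-((1 : ℕ) : ℤ)) ^ (m - i) = (-1) ^ m := by
      intro i hi
      have hi' : i ≤ m := Nat.lt_succ_iff.mp (Finset.mem_range.mp hi)
      push_cast
      rw [← pow_add]
      congr 1
      omega
    rw [Finset.sum_congr rfl h1, Finset.sum_const, Finset.card_range]
    have hc : n - m = (n + 1) - (m + 1) := by omega
    have hsymm : Nat.choose (n + 1) (n - m) = Nat.choose (n + 1) (m + 1) := by
      rw [hc, Nat.choose_symm (by omega)]
    have hmc := Nat.add_one_mul_choose_eq n m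
    have : (Nat.choose (n + 1) (n - m) : ℤ) * (m + 1) = ((n : ℤ) + 1) * (Nat.choose n m : ℤ) := by
      rw [hsymm]
      exact_mod_cast congrArg (Nat.cast (R := ℤ)) hmc.symm
    push_cast at this ⊢
    calc (Nat.choose (n + 1) (n - m) : ℤ) * ((m + 1) • (-1 : ℤ) ^ m)
        = ((Nat.choose (n + 1) (n - m) : ℤ) * ((m : ℤ) + 1)) * (-1) ^ m := by
          rw [nsmul_eq_mul]; push_cast; ring
      _ = (((n : ℤ) + 1) * (Nat.choose n m : ℤ)) * (-1) ^ m := by rw [this]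
      _ = ((n : ℤ) + 1) * ((-1) ^ m * (Nat.choose n m : ℤ)) := by ring
  rw [Finset.sum_congr rfl hinner, ← Finset.mul_sum, Int.alternating_sum_range_choose]
  simp [show n ≠ 0 by omega]

theorem delta_pos_iff_of_even (k d n : ℕ) (hk : 1 ≤ k) (hn : 2 ≤ n) (heven : Even n) :
    0 < delta k d n ↔ (k ≠ d + 1 ∨ (k = d + 1 ∧ d ≠ 0)) := by
  by_cases hcase : k = 1 ∧ d = 0
  · obtain ⟨hk1, hd0⟩ := hcase
    subst hk1; subst hd0
    rw [delta_one_zero n (by omega)]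
    simp
  · have hD : 0 < (d : ℤ) + (k : ℤ) - 1 := by
      have : 2 ≤ d + k := by omega
      have := (Nat.cast_le (α := ℤ)).mpr this
      push_cast at this
      omega
    have hodd : Odd (n + 1) := Even.add_one heven
    have hval : 0 < (d : ℤ) ^ (n + 1) - (1 - (k : ℤ)) ^ (n + 1) := by
      have h1k : (1 - (k : ℤ)) ^ (n + 1) = -(((k : ℤ) - 1) ^ (n + 1)) := by
        rw [← Odd.neg_pow hodd]; ring_nf
      rw [h1k, sub_neg_eq_add]
      rcases Nat.lt_or_ge d 1 with hd | hd
      · have hd0 : d = 0 := by omega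
        have hk2 : 2 ≤ k := by omega
        have : 0 < ((k : ℤ) - 1) ^ (n + 1) := by
          apply pow_pos
          have := (Nat.cast_le (α := ℤ)).mpr hk2
          push_cast at this; omega
        have h0 : (0 : ℤ) ≤ (d : ℤ) ^ (n + 1) := by positivity
        omega
      · have : 0 < (d : ℤ) ^ (n + 1) := by
          apply pow_pos
          exact_mod_cast hd
        have h0 : (0 : ℤ) ≤ ((k : ℤ) - 1) ^ (n + 1) := by
          apply pow_nonneg
          have := (Nat.cast_le (α := ℤ)).mpr hk
          push_cast at this; omega
        omega
    have hpos : 0 < delta k d n := by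
      by_contra h
      push_neg at h
      have := mul_nonpos_of_nonpos_of_nonneg h (le_of_lt hD)
      rw [delta_mul] at this
      omega
    constructor
    · intro _
      by_cases hkd : k = d + 1
      · right; exact ⟨hkd, by omega⟩
      · left; exact hkd
    · intro _; exact hpos
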